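/- arXiv:2207.04642 — 2 statements merged into one kernel-verified Lean document; each statement's English description precedes it below -/
import Mathlib

section
/- Let g be a vector space over a field K of characteristic 0 and π : ∧ⁿg → g an n-multilinear alternating map, viewed as an element of L_1. Then π defines an n-Lie bracket on g (i.e. π satisfies the Fundamental Identity π(x₁,…,x_{n−1},π(y₁,…,y_n)) = Σ_{i=1}^{n} π(y₁,…,y_{i−1},π(x₁,…,x_{n−1},y_i),y_{i+1},…,y_n)) if and only if [π,π]^{nLie} = 0. -/
open Finset

/-- The order-preserving inclusion `Fin (N-1) → Fin N` skipping the index `i`. -/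
def skipIdx {N : ℕ} (i : Fin N) (s : Fin (N - 1)) : Fin N :=
  if (s : ℕ) < (i : ℕ) then ⟨s, by have h1 := s.isLt; omega⟩
  else ⟨(s : ℕ) + 1, by have h1 := s.isLt; omega⟩

/-- `p`-cochains on `W` with values in `W` (blocks of `n-1` arguments, plus a final argument). -/
abbrev Cochain (W : Type*) (n p : ℕ) := (Fin p → (Fin (n - 1) → W)) → W → W

/-- The sign `(-1)^{(J,I)}` of the shuffle putting `J` before its complement. -/
def shuffleSign {N : ℕ} (J : Finset (Fin N)) : ℤ :=
  (-1) ^ ((∑ x ∈ J, (x : ℕ)) + ∑ a ∈ Finset.range J.card, a)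

variable {W : Type*} [AddCommGroup W]

/-- The composition `α ∘ β` of cochains, given by the shuffle-sum insertion formula. -/
def ncomp (n p q : ℕ) (α : Cochain W n p) (β : Cochain W n q) : Cochain W n (p + q) :=
  fun X z =>
    ∑ J ∈ Finset.powersetCard (q + 1) (Finset.univ : Finset (Fin (p + q + 1))),
      if hJ : J.card = q + 1 then
        (fun (eJ : Fin (q + 1) → Fin (p + q + 1)) (eI : Fin p → Fin (p + q + 1))
             (X' : Fin (p + q + 1) → Fin (n - 1) → W) =>
          shuffleSign J •
            (if (⟨p + q, by omega⟩ : Fin (p + q + 1)) ∈ J then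
              ((-1 : ℤ) ^ p) • α (fun t => X' (eI t)) (β (fun a => X' (eJ a.castSucc)) z)
            else
              ((-1 : ℤ) ^ ((Jᶜ.filter (fun i => i < eJ (Fin.last q))).card)) •
                ∑ s : Fin (n - 1),
                  α (fun t =>
                      if (t : ℕ) < (Jᶜ.filter (fun i => i < eJ (Fin.last q))).card then
                        X' (eI t)
                      else if (t : ℕ) = (Jᶜ.filter (fun i => i < eJ (Fin.last q))).card then
                        Function.update (X' (eJ (Fin.last q))) s
                          (β (fun a => X' (eJ a.castSucc)) (X' (eJ (Fin.last q)) s))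
                      else X' (eI ⟨(t : ℕ) - 1, by have := t.isLt; omega⟩)) z))
          (fun a => J.orderEmbOfFin hJ a)
          (fun t => Jᶜ.orderEmbOfFin (by rw [Finset.card_compl, hJ, Fintype.card_fin]; omega) t)
          (fun j => if h : (j : ℕ) < p + q then X ⟨j, h⟩ else 0)
      else 0

/-- The graded commutator bracket `[α,β] = (-1)^{pq} α∘β - β∘α`. -/
def nbracket (n p q : ℕ) (α : Cochain W n p) (β : Cochain W n q) : Cochain W n (p + q) :=
  fun X z => ((-1 : ℤ) ^ (p * q)) • ncomp n p q α β X z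
    - ncomp n q p β α (fun i => X (Fin.cast (by omega : q + p = p + q) i)) z

/-- Append a final element to a block of `n-1` elements, giving an `n`-tuple. -/
def tupSnoc {A : Type*} {n : ℕ} (X : Fin (n - 1) → A) (z : A) : Fin n → A :=
  fun t => if h : (t : ℕ) < n - 1 then X ⟨t, h⟩ else z

/-- Append a final element to `n-2` elements, giving an `(n-1)`-tuple. -/
def tupSnoc2 {A : Type*} {n : ℕ} (X : Fin (n - 2) → A) (z : A) : Fin (n - 1) → A :=
  fun t => if h : (t : ℕ) < n - 2 then X ⟨t, h⟩ else z

/-- From a block `y` of `n-1` elements, delete the entry at `s` and append `z`. -/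
def hatSnoc {A : Type*} {n : ℕ} (y : Fin (n - 1) → A) (s : Fin (n - 1)) (z : A) :
    Fin (n - 1) → A :=
  fun t => if h : (t : ℕ) < n - 2 then y (skipIdx s ⟨t, by omega⟩) else z

variable {K : Type*} [Field K] [CharZero K]
variable {g : Type*} [AddCommGroup g] [Module K g]
variable {V : Type*} [AddCommGroup V] [Module K V]

/-- The Fundamental (Filippov) Identity for an alternating `n`-multilinear bracket. -/
def FI {n : ℕ} (br : AlternatingMap K g g (Fin n)) : Prop :=
  ∀ (x : Fin (n - 1) → g) (y : Fin n → g),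
    br (tupSnoc x (br y)) = ∑ i : Fin n, br (Function.update y i (br (tupSnoc x (y i))))

/-- An `n`-ary bracket viewed as a `1`-cochain. -/
def toCochain {n : ℕ} (br : AlternatingMap K g g (Fin n)) : Cochain g n 1 :=
  fun X z => br (tupSnoc (X 0) z)

/-- The coboundary operator `δ_ρ` associated to a representation `ρ` of an `n`-Lie algebra. -/
def delta {n : ℕ} (p : ℕ) (br : AlternatingMap K g g (Fin n))
    (ρr : (Fin (n - 1) → g) → V → V)
    (α : (Fin p → (Fin (n - 1) → g)) → g → V) :
    (Fin (p + 1) → (Fin (n - 1) → g)) → g → V :=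
  fun χ z =>
    (∑ i : Fin (p + 1), ∑ k : Fin (p + 1),
      if (i : ℕ) < (k : ℕ) then
        ((-1 : ℤ) ^ ((i : ℕ) + 1)) • ∑ j : Fin (n - 1),
          α (fun t => if skipIdx i t = k
              then Function.update (χ k) j (br (tupSnoc (χ i) (χ k j)))
              else χ (skipIdx i t)) z
      else 0)
    + ∑ i : Fin (p + 1), ((-1 : ℤ) ^ ((i : ℕ) + 1)) •
        α (fun t => χ (skipIdx i t)) (br (tupSnoc (χ i) z))
    + ∑ i : Fin (p + 1), ((-1 : ℤ) ^ (i : ℕ)) •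
        ρr (χ i) (α (fun t => χ (skipIdx i t)) z)
    + ∑ i : Fin (n - 1), ((-1 : ℤ) ^ (n + p + 1 - (i : ℕ))) •
        ρr (fun s => if hs : (s : ℕ) < n - 2 then χ (Fin.last p) (skipIdx i ⟨s, by omega⟩) else z)
          (α (fun t => χ t.castSucc) (χ (Fin.last p) i))

/-- The `1`-cochain `π + ρ̄ + θ̄` on `g ⊕ V` built from the bracket and a generalized
representation. -/
def Dmap {n : ℕ} (br : AlternatingMap K g g (Fin n))
    (ρ : AlternatingMap K g (Module.End K V) (Fin (n - 1)))
    (θ : g →ₗ[K] (AlternatingMap K V V (Fin (n - 1)))) : Cochain (g × V) n 1 :=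
  fun X z =>
    (br (fun t => (tupSnoc (X 0) z t).1),
      (∑ i : Fin n, ((-1 : ℤ) ^ (n - 1 - (i : ℕ))) •
        ρ (fun s => (tupSnoc (X 0) z (skipIdx i s)).1) ((tupSnoc (X 0) z i).2))
      + ∑ i : Fin n, ((-1 : ℤ) ^ (n - 1 - (i : ℕ))) •
        θ ((tupSnoc (X 0) z i).1) (fun s => (tupSnoc (X 0) z (skipIdx i s)).2))

/-- `(V;ρ,θ)` is a generalized representation: `[π+ρ̄+θ̄, π+ρ̄+θ̄] = 0`. -/
def IsGenRep {n : ℕ} (br : AlternatingMap K g g (Fin n))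
    (ρ : AlternatingMap K g (Module.End K V) (Fin (n - 1)))
    (θ : g →ₗ[K] (AlternatingMap K V V (Fin (n - 1)))) : Prop :=
  ∀ X z, nbracket n 1 1 (Dmap br ρ θ) (Dmap br ρ θ) X z = 0

/-- A cochain on `g ⊕ V` is valued in `V`. -/
def ValuedInV {n p : ℕ} (α : Cochain (g × V) n p) : Prop := ∀ X z, (α X z).1 = 0

/-- A cochain on `g ⊕ V` vanishes when all arguments lie in `V`. -/
def VanishOnV {n p : ℕ} (α : Cochain (g × V) n p) : Prop :=
  ∀ (u : Fin p → Fin (n - 1) → V) (v : V),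
    α (fun i s => ((0 : g), u i s)) ((0 : g), v) = 0

/-- A cochain on `g` with values in `V`, extended to `g ⊕ V` (the summand inclusion
`C^p(g;V) ⊆ C^p_>(g⊕V,V)`). -/
def extGV {n p : ℕ} (α : (Fin p → (Fin (n - 1) → g)) → g → V) : Cochain (g × V) n p :=
  fun X z => (0, α (fun i s => (X i s).1) z.1)

/-- A linear map `g → V` viewed as a `1`-cochain in `C^0_>(g⊕V,V)`. -/
def ext0 {n : ℕ} (α : g →ₗ[K] V) : Cochain (g × V) n 0 := fun _ z => ((0 : g), α z.1)

/-- `β₃ ∈ Hom(∧ⁿ g, V)` viewed as a `2`-cochain in `C^1_>(g⊕V,V)`. -/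
def ext3 {n : ℕ} (β₃ : AlternatingMap K g V (Fin n)) : Cochain (g × V) n 1 :=
  fun X z => (0, β₃ (fun t => (tupSnoc (X 0) z t).1))

/-- `β₂ ∈ Hom(∧^{n-1} g ∧ V, V)` viewed as a `2`-cochain in `C^1_>(g⊕V,V)`. -/
def ext2 {n : ℕ} (β₂ : AlternatingMap K g (Module.End K V) (Fin (n - 1))) :
    Cochain (g × V) n 1 :=
  fun X z => (0, ∑ i : Fin n, ((-1 : ℤ) ^ (n - 1 - (i : ℕ))) •
    β₂ (fun s => (tupSnoc (X 0) z (skipIdx i s)).1) ((tupSnoc (X 0) z i).2))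

/-- The value of (the extension of) `β₁ ∈ Hom(∧^{n-1} V ∧ g, V)` on an `n`-tuple in `g ⊕ V`. -/
def ext1raw {n : ℕ} (β₁ : AlternatingMap K V (g →ₗ[K] V) (Fin (n - 1)))
    (w : Fin n → g × V) : V :=
  ∑ i : Fin n, ((-1 : ℤ) ^ (n - 1 - (i : ℕ))) • β₁ (fun s => (w (skipIdx i s)).2) ((w i).1)

/-- `β₁ ∈ Hom(∧^{n-1} V ∧ g, V)` viewed as a `2`-cochain in `C^1_>(g⊕V,V)`. -/
def ext1 {n : ℕ} (β₁ : AlternatingMap K V (g →ₗ[K] V) (Fin (n - 1))) :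
    Cochain (g × V) n 1 :=
  fun X z => (0, ext1raw β₁ (tupSnoc (X 0) z))

/-- A block of `g`-elements in `g ⊕ V`. -/
def gBlock {n : ℕ} (x : Fin (n - 1) → g) : Fin (n - 1) → g × V := fun s => (x s, 0)

/-- A block of `V`-elements in `g ⊕ V`. -/
def vBlock {n : ℕ} (u : Fin (n - 1) → V) : Fin (n - 1) → g × V := fun s => ((0 : g), u s)

/-
For a `1`-cochain `α` one has `[α, α] = -2 • α ∘ α`. For `α = π` the three shuffle terms of
`α ∘ α` are `∑ₛ π(X₁ with π(X₀, X₁ˢ) in slot s, z)`, `π(X₁, π(X₀, z))` and `-π(X₀, π(X₁, z))`: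
the first two make up the right-hand side of the Fundamental Identity at `x = X₀`, `y = (X₁, z)`,
the third is minus its left-hand side. As `2` is invertible, `[π, π] = 0` exactly when the
identity holds.
-/

section TupSnoc

variable {A : Type*} {m : ℕ}

lemma tupSnoc_castSucc (y : Fin m → A) (z : A) (s : Fin m) :
    tupSnoc (n := m + 1) y z s.castSucc = y s := by
  simp [tupSnoc]

lemma tupSnoc_last (y : Fin m → A) (z : A) : tupSnoc (n := m + 1) y z (Fin.last m) = z := by
  simp [tupSnoc]

lemma tupSnoc_init_last (y : Fin (m + 1) → A) : tupSnoc (Fin.init y) (y (Fin.last m)) = y := by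
  funext t
  induction t using Fin.lastCases with
  | last => exact tupSnoc_last _ _
  | cast s => exact tupSnoc_castSucc _ _ s

lemma update_tupSnoc_castSucc (y : Fin m → A) (z : A) (s : Fin m) (v : A) :
    Function.update (tupSnoc (n := m + 1) y z) s.castSucc v =
      tupSnoc (n := m + 1) (Function.update y s v) z := by
  funext t
  induction t using Fin.lastCases with
  | last =>
    rw [Function.update_of_ne (Fin.castSucc_lt_last s).ne', tupSnoc_last]
    exact (tupSnoc_last _ _).symm
  | cast t =>
    rw [tupSnoc_castSucc]
    rcases eq_or_ne t s with rfl | hts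
    · simp
    · simp [hts, tupSnoc_castSucc]

lemma update_tupSnoc_last (y : Fin m → A) (z v : A) :
    Function.update (tupSnoc (n := m + 1) y z) (Fin.last m) v = tupSnoc (n := m + 1) y v := by
  funext t
  induction t using Fin.lastCases with
  | last => simp [tupSnoc_last]
  | cast t => simp [tupSnoc_castSucc, Fin.castSucc_ne_last]

end TupSnoc

lemma sum_update_tupSnoc {R M : Type*} [Semiring R] [AddCommMonoid M] [Module R M] {m : ℕ}
    (br : AlternatingMap R M M (Fin (m + 1))) (x w : Fin m → M) (z : M) :
    ∑ i, br (Function.update (tupSnoc w z) i (br (tupSnoc x (tupSnoc (n := m + 1) w z i)))) =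
      ∑ s, br (tupSnoc (Function.update w s (br (tupSnoc x (w s)))) z) +
        br (tupSnoc w (br (tupSnoc (n := m + 1) x z))) := by
  rw [Fin.sum_univ_castSucc]
  simp only [tupSnoc_castSucc, update_tupSnoc_castSucc, tupSnoc_last, update_tupSnoc_last]
  rfl

lemma ncomp_one_one (n : ℕ) (α β : Cochain W n 1) (X : Fin 2 → Fin (n - 1) → W) (z : W) :
    ncomp n 1 1 α β X z =
      ∑ s, α (fun _ => Function.update (X 1) s (β (fun _ => X 0) (X 1 s))) z
        + α (fun _ => X 1) (β (fun _ => X 0) z) - α (fun _ => X 0) (β (fun _ => X 1) z) := by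
  rw [ncomp, show powersetCard (1 + 1) (univ : Finset (Fin (1 + 1 + 1))) = {{0, 1}, {0, 2}, {1, 2}}
    by decide, sum_insert (by decide), sum_insert (by decide), sum_singleton,
    dif_pos (by decide), dif_pos (by decide), dif_pos (by decide),
    ← orderEmbOfFin_unique (f := ![0, 1]) (by decide) (by decide) (by decide),
    ← orderEmbOfFin_unique (f := ![2]) (by decide) (by decide) (by decide),
    ← orderEmbOfFin_unique (f := ![0, 2]) (by decide) (by decide) (by decide),
    ← orderEmbOfFin_unique (f := ![1]) (by decide) (by decide) (by decide),
    ← orderEmbOfFin_unique (f := ![1, 2]) (by decide) (by decide) (by decide),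
    ← orderEmbOfFin_unique (f := ![0]) (by decide) (by decide) (by decide)]
  have h01 : shuffleSign ({0, 1} : Finset (Fin 3)) = 1 := by decide
  have h02 : shuffleSign ({0, 2} : Finset (Fin 3)) = -1 := by decide
  have h12 : shuffleSign ({1, 2} : Finset (Fin 3)) = 1 := by decide
  have hlast : Fin.last 1 = 1 := rfl
  have hfilt : #(filter (· < (1 : Fin 3)) ({0, 1}ᶜ : Finset (Fin 3))) = 0 := by decide
  simp only [hlast, Matrix.cons_val_one, Matrix.cons_val_zero, hfilt]
  simp [h01, h02, h12, Fin.fin_one_eq_zero, sub_eq_add_neg, add_assoc]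

lemma nbracket_one_one_self (n : ℕ) (α : Cochain W n 1) (X : Fin 2 → Fin (n - 1) → W) (z : W) :
    nbracket n 1 1 α α X z = (-2 : ℤ) • ncomp n 1 1 α α X z := by
  simp only [nbracket, Fin.cast_eq_self]
  module

lemma nbracket_toCochain_self {K g : Type*} [Field K] [AddCommGroup g] [Module K g] {m : ℕ}
    (br : AlternatingMap K g g (Fin (m + 1)))
    (X : Fin 2 → Fin m → g) (z : g) :
    nbracket (m + 1) 1 1 (toCochain br) (toCochain br) X z =
      (-2 : ℤ) • (∑ i, br (Function.update (tupSnoc (X 1) z) i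
          (br (tupSnoc (X 0) (tupSnoc (n := m + 1) (X 1) z i))))
        - br (tupSnoc (X 0) (br (tupSnoc (n := m + 1) (X 1) z)))) := by
  rw [nbracket_one_one_self, ncomp_one_one, sum_update_tupSnoc]
  simp only [toCochain]

theorem stmt1 (K : Type*) [Field K] [CharZero K] (g : Type*) [AddCommGroup g] [Module K g]
    (n : ℕ) (hn : 2 ≤ n) (br : AlternatingMap K g g (Fin n)) :
    FI br ↔ ∀ (X : Fin 2 → Fin (n - 1) → g) (z : g),
      nbracket n 1 1 (toCochain br) (toCochain br) X z = 0 := by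
  obtain ⟨m, rfl⟩ : ∃ m, n = m + 1 := ⟨n - 1, by omega⟩
  have : IsAddTorsionFree g := .of_isTorsionFree K g
  simp only [nbracket_toCochain_self, smul_eq_zero, sub_eq_zero]
  constructor
  · intro hFI X z
    exact Or.inr (hFI (X 0) (tupSnoc (X 1) z)).symm
  · intro h x y
    have hxy := h ![x, Fin.init y] (y (Fin.last m))
    simp only [Matrix.cons_val_zero, Matrix.cons_val_one, tupSnoc_init_last] at hxy
    exact (hxy.resolve_left (by norm_num)).symm
end

section
/- Let g be an n-Lie algebra over a field K of characteristic 0 with bracket π, and let (V;ρ,θ) be a generalized representation of g. Then for every p ≥ 0, taking the graded commutator bracket of π + ρ̄ + θ̄ with elements of C^p_>(g⊕V,V) lands in C^{p+1}_>(g⊕V,V): [π + ρ̄ + θ̄, C^p_>(g⊕V,V)]^{nLie} ⊆ C^{p+1}_>(g⊕V,V). -/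
open Finset

variable {W : Type*} [AddCommGroup W]

variable {K : Type*} [Field K] [CharZero K]
variable {g : Type*} [AddCommGroup g] [Module K g]
variable {V : Type*} [AddCommGroup V] [Module K V]

/-!
Every term of the shuffle sum defining `α ∘ β` evaluates `α` on the given arguments, with one
of them replaced by a value of `β`. Write `D = π + ρ̄ + θ̄`. If `α` is `V`-valued, so is every
term of `α ∘ D`; in `D ∘ α` every term feeds a `V`-valued argument into `D`, whose
`g`-component is the multilinear bracket `π` and hence vanishes. If moreover all arguments lie
in `V`, then `D` and `α` both vanish on them, so every term of both compositions is zero.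
-/

section Ncomp

variable {n p q : ℕ} {α : Cochain W n p} {β : Cochain W n q}

theorem ncomp_mem_of_mapsTo (S T : AddSubgroup W)
    (hβ : ∀ Y y, (∀ i s, Y i s ∈ S) → y ∈ S → β Y y ∈ S)
    (hα : ∀ Y y, (∀ i s, Y i s ∈ S) → y ∈ S → α Y y ∈ T)
    {X : Fin (p + q) → Fin (n - 1) → W} {z : W} (hX : ∀ i s, X i s ∈ S) (hz : z ∈ S) :
    ncomp n p q α β X z ∈ T := by
  have hX' : ∀ (j : Fin (p + q + 1)) s,
      (if h : (j : ℕ) < p + q then X ⟨j, h⟩ else 0) s ∈ S := by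
    intro j s
    split
    · exact hX _ _
    · exact S.zero_mem
  refine sum_mem fun J hJ => ?_
  rw [dif_pos (mem_powersetCard.mp hJ).2]
  refine zsmul_mem ?_ _
  split
  · exact zsmul_mem (hα _ _ (fun _ _ => hX' _ _) (hβ _ _ (fun _ _ => hX' _ _) hz)) _
  · refine zsmul_mem (sum_mem fun s _ => hα _ _ (fun t s' => ?_) hz) _
    split_ifs
    · exact hX' _ _
    · rw [Function.update_apply]
      split
      · exact hβ _ _ (fun _ _ => hX' _ _) (hX' _ _)
      · exact hX' _ _
    · exact hX' _ _

theorem card_filter_compl_lt_eq_zero {m : ℕ} {J : Finset (Fin (m + 1))} (hJ : J.card = m)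
    (hlast : Fin.last m ∉ J) (x : Fin (m + 1)) : (Jᶜ.filter (· < x)).card = 0 := by
  obtain ⟨a, ha⟩ := card_eq_one.mp (show Jᶜ.card = 1 by simp [card_compl, hJ])
  have : Fin.last m = a := by simpa [ha] using mem_compl.mpr hlast
  simp [ha, ← this, Fin.le_last]

theorem ncomp_one_mem (S : Set W) (T : AddSubgroup W) (hβ : ∀ Y y, β Y y ∈ S)
    {α : Cochain W n 1} (hα : ∀ Y y, (y ∈ S ∨ ∃ s, Y 0 s ∈ S) → α Y y ∈ T)
    (X : Fin (1 + q) → Fin (n - 1) → W) (z : W) : ncomp n 1 q α β X z ∈ T := by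
  refine sum_mem fun J hJ => ?_
  have hJ := (mem_powersetCard.mp hJ).2
  rw [dif_pos hJ]
  refine zsmul_mem ?_ _
  split
  · exact zsmul_mem (hα _ _ (.inl (hβ _ _))) _
  case isFalse hlast =>
    -- the only index outside `J` is the last one, so `β` is inserted into the first block
    have h0 := card_filter_compl_lt_eq_zero (m := 1 + q) (by omega) hlast
      (J.orderEmbOfFin hJ (Fin.last q))
    refine zsmul_mem (sum_mem fun s _ => hα _ _ (.inr ⟨s, ?_⟩)) _
    simp only [h0, Fin.coe_ofNat_eq_mod, Nat.zero_mod, lt_self_iff_false, if_false, if_true,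
      Function.update_self]
    exact hβ _ _

end Ncomp

theorem tupSnoc_apply_mem {A : Type*} {n : ℕ} {S : Set A} {X : Fin (n - 1) → A} {z : A}
    (hX : ∀ s, X s ∈ S) (hz : z ∈ S) (t : Fin n) : tupSnoc X z t ∈ S := by
  unfold tupSnoc
  split
  · exact hX _
  · exact hz

section VPart

variable {g V : Type*} [AddCommGroup g] [AddCommGroup V]

variable (g V) in
def vPart : AddSubgroup (g × V) := (AddMonoidHom.fst g V).ker

theorem mem_vPart {x : g × V} : x ∈ vPart g V ↔ x.1 = 0 := AddMonoidHom.mem_ker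

theorem VanishOnV.apply_eq_zero {n p : ℕ} {α : Cochain (g × V) n p} (h : VanishOnV α)
    {X : Fin p → Fin (n - 1) → g × V} {z : g × V}
    (hX : ∀ i s, X i s ∈ vPart g V) (hz : z ∈ vPart g V) : α X z = 0 := by
  have hXe : X = fun i s => ((0 : g), (X i s).2) := by
    funext i s
    exact Prod.ext (mem_vPart.mp (hX i s)) rfl
  rw [hXe, show z = ((0 : g), z.2) from Prod.ext (mem_vPart.mp hz) rfl]
  exact h _ _

end VPart

section Dmap

variable {K : Type*} [Field K] {g V : Type*} [AddCommGroup g] [Module K g]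
  [AddCommGroup V] [Module K V] {n : ℕ} (br : AlternatingMap K g g (Fin n))
  (ρ : AlternatingMap K g (Module.End K V) (Fin (n - 1)))
  (θ : g →ₗ[K] (AlternatingMap K V V (Fin (n - 1))))

theorem Dmap_fst_mem_vPart (hn : 0 < n) {X : Fin 1 → Fin (n - 1) → g × V} {z : g × V}
    (h : z ∈ vPart g V ∨ ∃ s, X 0 s ∈ vPart g V) : Dmap br ρ θ X z ∈ vPart g V := by
  rw [mem_vPart]
  obtain hz | ⟨s, hs⟩ := h
  · refine br.map_coord_zero ⟨n - 1, by omega⟩ ?_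
    simpa [tupSnoc] using mem_vPart.mp hz
  · refine br.map_coord_zero ⟨s, by omega⟩ ?_
    simpa [tupSnoc] using mem_vPart.mp hs

theorem Dmap_eq_zero (hn : 2 ≤ n) {X : Fin 1 → Fin (n - 1) → g × V} {z : g × V}
    (hX : ∀ s, X 0 s ∈ vPart g V) (hz : z ∈ vPart g V) : Dmap br ρ θ X z = 0 := by
  have hfst : ∀ t, (tupSnoc (X 0) z t).1 = 0 := fun t =>
    mem_vPart.mp (tupSnoc_apply_mem (S := (vPart g V : Set (g × V))) hX hz t)
  have hρ : ρ (fun _ => 0) = 0 := ρ.map_coord_zero ⟨0, by omega⟩ rfl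
  refine Prod.ext (mem_vPart.mp (Dmap_fst_mem_vPart br ρ θ (by omega) (.inl hz))) ?_
  simp [Dmap, hρ, hfst]

end Dmap

theorem nbracket_mem {n p q : ℕ} {α : Cochain W n p} {β : Cochain W n q} (T : AddSubgroup W)
    {X : Fin (p + q) → Fin (n - 1) → W} {z : W} (hαβ : ncomp n p q α β X z ∈ T)
    (hβα : ncomp n q p β α (fun i => X (Fin.cast (by omega) i)) z ∈ T) :
    nbracket n p q α β X z ∈ T :=
  sub_mem (zsmul_mem hαβ _) hβα

theorem stmt4_general (K : Type*) [Field K] (g V : Type*) [AddCommGroup g] [Module K g]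
    [AddCommGroup V] [Module K V] (n : ℕ) (hn : 2 ≤ n)
    (br : AlternatingMap K g g (Fin n))
    (ρ : AlternatingMap K g (Module.End K V) (Fin (n - 1)))
    (θ : g →ₗ[K] (AlternatingMap K V V (Fin (n - 1))))
    (p : ℕ) (α : Cochain (g × V) n p) (h1 : ValuedInV α) (h2 : VanishOnV α) :
    ValuedInV (nbracket n 1 p (Dmap br ρ θ) α)
      ∧ VanishOnV (nbracket n 1 p (Dmap br ρ θ) α) := by
  have hα : ∀ X z, α X z ∈ vPart g V := fun X z => mem_vPart.mpr (h1 X z)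
  constructor
  · intro X z
    refine mem_vPart.mp (nbracket_mem _ ?_ ?_)
    · exact ncomp_one_mem _ _ hα (fun Y y h => Dmap_fst_mem_vPart br ρ θ (by omega) h) X z
    · exact ncomp_mem_of_mapsTo ⊤ _ (fun _ _ _ _ => trivial) (fun Y y _ _ => hα Y y)
        (fun _ _ => trivial) trivial
  · intro u v
    have hD : ∀ Y y, (∀ i s, Y i s ∈ vPart g V) → y ∈ vPart g V → Dmap br ρ θ Y y = 0 :=
      fun Y y hY hy => Dmap_eq_zero br ρ θ hn (hY 0) hy
    have hu : ∀ i s, ((0 : g), u i s) ∈ vPart g V := fun _ _ => mem_vPart.mpr rfl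
    refine AddSubgroup.mem_bot.mp (nbracket_mem _ ?_ ?_)
    · exact ncomp_mem_of_mapsTo _ _ (fun Y y _ _ => hα Y y)
        (fun Y y hY hy => AddSubgroup.mem_bot.mpr (hD Y y hY hy)) hu (mem_vPart.mpr rfl)
    · exact ncomp_mem_of_mapsTo _ _ (fun Y y hY hy => hD Y y hY hy ▸ zero_mem _)
        (fun Y y hY hy => AddSubgroup.mem_bot.mpr (h2.apply_eq_zero hY hy))
        (fun _ _ => hu _ _) (mem_vPart.mpr rfl)

theorem stmt4 (K : Type*) [Field K] [CharZero K] (g V : Type*) [AddCommGroup g] [Module K g]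
    [AddCommGroup V] [Module K V] (n : ℕ) (hn : 2 ≤ n)
    (br : AlternatingMap K g g (Fin n)) (hbr : FI br)
    (ρ : AlternatingMap K g (Module.End K V) (Fin (n - 1)))
    (θ : g →ₗ[K] (AlternatingMap K V V (Fin (n - 1)))) (hrep : IsGenRep br ρ θ)
    (p : ℕ) (α : Cochain (g × V) n p) (h1 : ValuedInV α) (h2 : VanishOnV α) :
    ValuedInV (nbracket n 1 p (Dmap br ρ θ) α)
      ∧ VanishOnV (nbracket n 1 p (Dmap br ρ θ) α) :=
  stmt4_general K g V n hn br ρ θ p α h1 h2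
end
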